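/- arXiv:2510.01867 — 3 statements merged into one kernel-verified Lean document; each statement's English description precedes it below -/
import Mathlib

section
/- Let X ⊆ R^d be convex, S ⊆ X a nonempty closed convex subset, and f : X → R a G-Lipschitz convex function. Define f̃(x) = f(x) + 2G·dist(x, S). Then every minimizer of f̃ over X lies in S, i.e., argmin_{x∈X} f̃(x) ⊆ S (assuming a minimizer exists). -/
open Metric

/-- every minimizer over `X` of the auxiliary function
`f̃ x = f x + 2G·dist(x,S)` lies in `S`. -/
theorem stmt1 {d : ℕ} (X S : Set (EuclideanSpace ℝ (Fin d)))
    (f : EuclideanSpace ℝ (Fin d) → ℝ) (G : ℝ) (hG : 0 < G)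
    (hX : Convex ℝ X) (hSX : S ⊆ X) (hSne : S.Nonempty) (hScl : IsClosed S)
    (hSconv : Convex ℝ S)
    (hfconv : ConvexOn ℝ X f)
    (hflip : ∀ x ∈ X, ∀ y ∈ X, |f x - f y| ≤ G * ‖x - y‖)
    (z : EuclideanSpace ℝ (Fin d)) (hz : z ∈ X)
    (hmin : ∀ y ∈ X, f z + 2 * G * infDist z S ≤ f y + 2 * G * infDist y S) :
    z ∈ S := by
  obtain ⟨p, hpS, hpd⟩ := hScl.exists_infDist_eq_dist hSne z
  have h1 := hmin p (hSX hpS)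
  have h2 : infDist p S = 0 := by
    rw [← hScl.closure_eq] at hpS
    exact infDist_zero_of_mem_closure hpS
  have h3 := hflip z hz p (hSX hpS)
  have h4 : ‖z - p‖ = infDist z S := by rw [hpd, dist_eq_norm]
  have h5 : |f z - f p| ≤ G * infDist z S := by rwa [h4] at h3
  have h6 : infDist z S ≤ 0 := by
    have := abs_le.mp h5
    nlinarith [this.1, this.2]
  have h7 : infDist z S = 0 := le_antisymm h6 (infDist_nonneg)
  have := (mem_closure_iff_infDist_zero hSne).mpr h7
  rwa [hScl.closure_eq] at this
end

section
/- (Dynamic-comparator telescoping bound) Let X ⊆ R^d be convex with diameter D, let x_1,…,x_{T+1} ∈ X and u_1,…,u_T ∈ X, and let η_1 ≥ … ≥ η_T > 0. Then Σ_{t=1}^{T−1} (‖x_{t+1} − u_{t+1}‖²/η_{t+1} − ‖x_{t+1} − u_t‖²/η_t) ≤ D²(1/η_T − 1/η_1) + (2D/η_T)·Σ_{t=1}^{T−1} ‖u_{t+1} − u_t‖. -/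
open Finset

/-- dynamic-comparator telescoping bound: with all points in a set `X`
of diameter at most `D` and non-increasing positive step sizes `η_1 ≥ … ≥ η_T > 0`
(indices `1,…,T`),
`Σ_{t=1}^{T−1} (‖x_{t+1} − u_{t+1}‖²/η_{t+1} − ‖x_{t+1} − u_t‖²/η_t)`
`≤ D²(1/η_T − 1/η_1) + (2D/η_T)·Σ_{t=1}^{T−1} ‖u_{t+1} − u_t‖`. -/
theorem stmt13 {d : ℕ} (T : ℕ) (hT : 1 ≤ T)
    (X : Set (EuclideanSpace ℝ (Fin d))) (hXconv : Convex ℝ X)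
    (D : ℝ) (hD : 0 ≤ D)
    (hdiam : ∀ a ∈ X, ∀ b ∈ X, ‖a - b‖ ≤ D)
    (x u : ℕ → EuclideanSpace ℝ (Fin d))
    (hx : ∀ t, x t ∈ X) (hu : ∀ t, u t ∈ X)
    (η : ℕ → ℝ) (hηpos : ∀ t, 0 < η t) (hηmono : ∀ t, η (t + 1) ≤ η t) :
    ∑ t ∈ Finset.Icc 1 (T - 1),
        (‖x (t + 1) - u (t + 1)‖ ^ 2 / η (t + 1) -
          ‖x (t + 1) - u t‖ ^ 2 / η t) ≤
      D ^ 2 * (1 / η T - 1 / η 1) +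
        (2 * D / η T) * ∑ t ∈ Finset.Icc 1 (T - 1), ‖u (t + 1) - u t‖ := by
  have hanti : ∀ m n : ℕ, m ≤ n → η n ≤ η m := fun m n h =>
    antitone_nat_of_succ_le hηmono h
  have key : ∀ t ∈ Finset.Icc 1 (T - 1),
      ‖x (t + 1) - u (t + 1)‖ ^ 2 / η (t + 1) - ‖x (t + 1) - u t‖ ^ 2 / η t ≤
      D ^ 2 * (1 / η (t + 1) - 1 / η t) + (2 * D / η T) * ‖u (t + 1) - u t‖ := by
    intro t ht
    obtain ⟨ht1, ht2⟩ := Finset.mem_Icc.mp ht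
    have htT : t + 1 ≤ T := by omega
    set a := ‖x (t + 1) - u (t + 1)‖ with ha_def
    set b := ‖x (t + 1) - u t‖ with hb_def
    set c := ‖u (t + 1) - u t‖ with hc_def
    have hab : a - b ≤ c := by
      have h1 : a - b ≤ ‖(x (t + 1) - u (t + 1)) - (x (t + 1) - u t)‖ :=
        norm_sub_norm_le _ _
      have h2 : (x (t + 1) - u (t + 1)) - (x (t + 1) - u t) = u t - u (t + 1) := by abel
      rw [h2, norm_sub_rev] at h1
      exact h1
    have haD : a ≤ D := hdiam _ (hx _) _ (hu _)
    have hbD : b ≤ D := hdiam _ (hx _) _ (hu _)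
    have ha0 : 0 ≤ a := norm_nonneg _
    have hb0 : 0 ≤ b := norm_nonneg _
    have hc0 : 0 ≤ c := norm_nonneg _
    have hηt := hηpos t
    have hηt1 := hηpos (t + 1)
    have hηT := hηpos T
    have hm1 : η T ≤ η (t + 1) := hanti _ _ htT
    have hm2 : η (t + 1) ≤ η t := hηmono t
    have e1 : 1 / η t ≤ 1 / η (t + 1) := one_div_le_one_div_of_le hηt1 hm2
    have e2 : 1 / η (t + 1) ≤ 1 / η T := one_div_le_one_div_of_le hηT hm1
    set p := 1 / η (t + 1) with hp_def
    set q := 1 / η t with hq_def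
    set r := 1 / η T with hr_def
    have hq0 : 0 < q := by positivity
    have hp0 : 0 < p := by positivity
    have hr0 : 0 < r := by positivity
    have hrw1 : a ^ 2 / η (t + 1) = a ^ 2 * p := by rw [hp_def]; ring
    have hrw2 : b ^ 2 / η t = b ^ 2 * q := by rw [hq_def]; ring
    have hrw3 : 2 * D / η T = 2 * D * r := by rw [hr_def]; ring
    rw [hrw1, hrw2, hrw3]
    have h3 : a ^ 2 - b ^ 2 ≤ 2 * D * c := by
      have h1 : (a - b) * (a + b) ≤ c * (a + b) :=
        mul_le_mul_of_nonneg_right hab (by linarith)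
      have h2 : c * (a + b) ≤ c * (2 * D) := mul_le_mul_of_nonneg_left (by linarith) hc0
      nlinarith
    have h4 : (a ^ 2 - b ^ 2) * p ≤ 2 * D * c * r := by
      rcases le_or_gt (a ^ 2 - b ^ 2) 0 with h | h
      · have : (a ^ 2 - b ^ 2) * p ≤ 0 := mul_nonpos_of_nonpos_of_nonneg h hp0.le
        have : 0 ≤ 2 * D * c * r := by positivity
        linarith
      · calc (a ^ 2 - b ^ 2) * p ≤ (a ^ 2 - b ^ 2) * r :=
              mul_le_mul_of_nonneg_left e2 h.le
          _ ≤ 2 * D * c * r := mul_le_mul_of_nonneg_right h3 hr0.le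
    have h5 : b ^ 2 * (p - q) ≤ D ^ 2 * (p - q) :=
      mul_le_mul_of_nonneg_right (by nlinarith) (by linarith)
    have h4' : (a ^ 2 - b ^ 2) * p ≤ 2 * D * r * c := by
      rw [show 2 * D * r * c = 2 * D * c * r from by ring]; exact h4
    have hid : a ^ 2 * p - b ^ 2 * q = b ^ 2 * (p - q) + (a ^ 2 - b ^ 2) * p := by ring
    linarith
  have step1 := Finset.sum_le_sum key
  have step2 : ∑ t ∈ Finset.Icc 1 (T - 1),
      (D ^ 2 * (1 / η (t + 1) - 1 / η t) + (2 * D / η T) * ‖u (t + 1) - u t‖)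
      = D ^ 2 * ∑ t ∈ Finset.Icc 1 (T - 1), (1 / η (t + 1) - 1 / η t)
        + (2 * D / η T) * ∑ t ∈ Finset.Icc 1 (T - 1), ‖u (t + 1) - u t‖ := by
    rw [Finset.sum_add_distrib, Finset.mul_sum, Finset.mul_sum]
  have htel : ∑ t ∈ Finset.Icc 1 (T - 1), (1 / η (t + 1) - 1 / η t)
      = 1 / η T - 1 / η 1 := by
    have hIc : Finset.Icc 1 (T - 1) = Finset.Ico 1 T := by
      rw [← Finset.Ico_add_one_right_eq_Icc]
      congr 1
      omega
    rw [hIc, Finset.sum_Ico_eq_sum_range]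
    have h0 : ∀ i ∈ Finset.range (T - 1),
        1 / η (1 + i + 1) - 1 / η (1 + i)
          = (fun j => 1 / η (j + 1)) (i + 1) - (fun j => 1 / η (j + 1)) i := by
      intro i _
      simp only [Nat.add_comm 1 i]
    rw [Finset.sum_congr rfl h0, Finset.sum_range_sub (fun j => 1 / η (j + 1)),
      Nat.sub_add_cancel hT]
  rw [step2, htel] at step1
  exact step1
end

section
/- (Dynamic regret of adaptive OGD) Let X ⊆ R^d be closed convex with diameter D, f_1,…,f_T : X → R convex, and let x_{t+1} = Proj_X(x_t − η_t ∇f_t(x_t)) with η_t = (D+1)√(1+P)/√(2 Σ_{τ=1}^t ‖∇f_τ(x_τ)‖²). Then for any comparator sequence u_1,…,u_T ∈ X with path length Σ_{t=1}^{T−1} ‖u_{t+1} − u_t‖ ≤ P, Σ_{t=1}^T (f_t(x_t) − f_t(u_t)) ≤ (D+1)√(2(1+P))·√(Σ_{t=1}^T ‖∇f_t(x_t)‖²). -/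
open Finset
open scoped RealInnerProductSpace

/-!
Projection onto `X` does not increase the distance to points of `X`, so one step of projected
subgradient descent gives `2 η_t ⟪g_t, x_t - u_t⟫ ≤ ‖x_t - u_t‖² - ‖x_{t+1} - u_t‖² + η_t² ‖g_t‖²`,
and by the subgradient inequality the left side dominates `2 η_t (f_t(x_t) - f_t(u_t))`.
After dividing by `2 η_t` and summing by parts (`1/η_t` is nondecreasing), the distance terms
telescope except where the comparator moves, which costs `2D ‖u_{t+1} - u_t‖`; altogether they
contribute at most `(D² + 2DP) / (2 η_T) ≤ (D+1)²(1+P) / (2 η_T)`. The step-size terms are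
controlled by `∑ a_t / √(a_1 + ⋯ + a_t) ≤ 2 √(a_1 + ⋯ + a_T)`. Each of the two parts is at most
`(D+1) √(1+P) √(∑ ‖g_t‖²) / √2`.
-/

section Projection

variable {E : Type*} [NormedAddCommGroup E] [InnerProductSpace ℝ E] {X : Set E}

theorem inner_sub_sub_nonpos_of_nearest (hX : Convex ℝ X) {y p : E} (hp : p ∈ X)
    (hmin : ∀ z ∈ X, ‖y - p‖ ≤ ‖y - z‖) {z : E} (hz : z ∈ X) : ⟪y - p, z - p⟫ ≤ 0 := by
  have : Nonempty X := ⟨⟨p, hp⟩⟩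
  refine (norm_eq_iInf_iff_real_inner_le_zero hX hp).1 ?_ z hz
  exact le_antisymm (le_ciInf fun w => hmin w w.2)
    (ciInf_le ⟨0, by rintro r ⟨w, rfl⟩; positivity⟩ (⟨p, hp⟩ : X))

theorem sq_norm_sub_le_of_nearest (hX : Convex ℝ X) {y p : E} (hp : p ∈ X)
    (hmin : ∀ z ∈ X, ‖y - p‖ ≤ ‖y - z‖) {z : E} (hz : z ∈ X) :
    ‖p - z‖ ^ 2 ≤ ‖y - z‖ ^ 2 := by
  have h := inner_sub_sub_nonpos_of_nearest hX hp hmin hz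
  have e : ‖y - z‖ ^ 2 = ‖y - p‖ ^ 2 - 2 * ⟪y - p, z - p⟫ + ‖z - p‖ ^ 2 := by
    rw [← norm_sub_sq_real, sub_sub_sub_cancel_right]
  rw [e, norm_sub_rev]
  nlinarith [sq_nonneg ‖y - p‖]

theorem two_mul_inner_le_of_nearest (hX : Convex ℝ X) {x x' g z : E} {η : ℝ}
    (hx' : x' ∈ X) (hmin : ∀ w ∈ X, ‖(x - η • g) - x'‖ ≤ ‖(x - η • g) - w‖) (hz : z ∈ X) :
    2 * η * ⟪g, x - z⟫ ≤ ‖x - z‖ ^ 2 - ‖x' - z‖ ^ 2 + η ^ 2 * ‖g‖ ^ 2 := by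
  have h := sq_norm_sub_le_of_nearest hX hx' hmin hz
  have e : ‖(x - η • g) - z‖ ^ 2 = ‖x - z‖ ^ 2 - 2 * η * ⟪g, x - z⟫ + η ^ 2 * ‖g‖ ^ 2 := by
    rw [sub_right_comm, norm_sub_sq_real, real_inner_smul_right, real_inner_comm, norm_smul,
      mul_pow, Real.norm_eq_abs, sq_abs]
    ring
  linarith

end Projection

theorem sq_norm_sub_sub_sq_norm_sub_le {E : Type*} [SeminormedAddCommGroup E] {p q r : E} {D : ℝ}
    (hq : ‖p - q‖ ≤ D) (hr : ‖p - r‖ ≤ D) : ‖p - q‖ ^ 2 - ‖p - r‖ ^ 2 ≤ 2 * D * ‖q - r‖ := by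
  have h : ‖p - q‖ - ‖p - r‖ ≤ ‖q - r‖ := by
    simpa [norm_sub_rev q r] using norm_sub_norm_le (p - q) (p - r)
  nlinarith [norm_nonneg (p - q), norm_nonneg (p - r), norm_nonneg (q - r)]

/-- Summation by parts. It is applied with `a_t = ‖x_t - u_t‖²` and `b_t = ‖x_{t+1} - u_t‖²`, so
that `a_{t+1} - b_t` is the cost of moving the comparator. -/
theorem sum_mul_sub_le_of_monotone {c a b δ : ℕ → ℝ} {M : ℝ} (hc0 : ∀ t, 0 ≤ c t)
    (hc : Monotone c) (haM : ∀ t, a t ≤ M) (hb : ∀ t, 0 ≤ b t)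
    (hδ : ∀ t, a (t + 1) - b t ≤ δ t) (hδ0 : ∀ t, 0 ≤ δ t) (n : ℕ) :
    ∑ t ∈ range (n + 1), c t * (a t - b t) ≤ c n * (M + ∑ t ∈ range n, δ t) := by
  suffices h : ∑ t ∈ range (n + 1), c t * (a t - b t) + c n * b n ≤
      c n * (M + ∑ t ∈ range n, δ t) by
    nlinarith [mul_nonneg (hc0 n) (hb n)]
  induction n with
  | zero =>
    simp only [zero_add, sum_range_one, range_zero, sum_empty, add_zero]
    linarith [mul_le_mul_of_nonneg_left (haM 0) (hc0 0)]
  | succ n ih =>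
    have hcn : c n ≤ c (n + 1) := hc n.le_succ
    have hS : 0 ≤ ∑ t ∈ range (n + 1), δ t := sum_nonneg fun t _ => hδ0 t
    rw [sum_range_succ _ (n + 1)]
    nlinarith [mul_le_mul_of_nonneg_left (haM (n + 1)) (sub_nonneg.2 hcn),
      mul_le_mul_of_nonneg_left (hδ n) (hc0 n), mul_le_mul_of_nonneg_right hcn hS,
      congrArg (c n * ·) (sum_range_succ δ n)]

theorem div_sqrt_add_le {s a : ℝ} (hs : 0 ≤ s) (ha : 0 ≤ a) :
    a / √(s + a) ≤ 2 * (√(s + a) - √s) := by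
  rcases (add_nonneg hs ha).eq_or_lt with h | h
  · obtain ⟨rfl, rfl⟩ := (add_eq_zero_iff_of_nonneg hs ha).1 h.symm
    simp
  rw [div_le_iff₀ (Real.sqrt_pos.2 h)]
  nlinarith [Real.sq_sqrt hs, Real.sq_sqrt h.le, sq_nonneg (√(s + a) - √s)]

theorem sum_div_sqrt_sum_range_succ_le {a : ℕ → ℝ} (ha : ∀ t, 0 ≤ a t) (n : ℕ) :
    ∑ t ∈ range n, a t / √(∑ τ ∈ range (t + 1), a τ) ≤ 2 * √(∑ t ∈ range n, a t) := by
  induction n with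
  | zero => simp
  | succ n ih =>
    rw [sum_range_succ, sum_range_succ a n]
    linarith [div_sqrt_add_le (sum_nonneg fun t (_ : t ∈ range n) => ha t) (ha n)]

theorem sum_inner_sub_le_of_projected_gradient {E : Type*} [NormedAddCommGroup E]
    [InnerProductSpace ℝ E] {X : Set E} (hX : Convex ℝ X) {D : ℝ} (hD : 0 ≤ D)
    (hdiam : ∀ a ∈ X, ∀ b ∈ X, ‖a - b‖ ≤ D) {x u g : ℕ → E} {η : ℕ → ℝ}
    (hη : ∀ t, 0 < η t) (hη_anti : Antitone η) (hx : ∀ t, x t ∈ X) (hu : ∀ t, u t ∈ X)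
    (hstep : ∀ t, ∀ z ∈ X, ‖(x t - η t • g t) - x (t + 1)‖ ≤ ‖(x t - η t • g t) - z‖)
    (n : ℕ) :
    ∑ t ∈ range (n + 1), ⟪g t, x t - u t⟫ ≤
      (D ^ 2 + 2 * D * ∑ t ∈ range n, ‖u (t + 1) - u t‖) / (2 * η n) +
        ∑ t ∈ range (n + 1), η t * ‖g t‖ ^ 2 / 2 := by
  set c : ℕ → ℝ := fun t => (2 * η t)⁻¹
  have hc : Monotone c := fun s t hst => by
    simp only [c]; gcongr; exacts [by linarith [hη t], hη_anti hst]
  have hone : ∀ t, ⟪g t, x t - u t⟫ ≤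
      c t * (‖x t - u t‖ ^ 2 - ‖x (t + 1) - u t‖ ^ 2) + η t * ‖g t‖ ^ 2 / 2 := by
    intro t
    have h := two_mul_inner_le_of_nearest hX (hx (t + 1)) (hstep t) (hu t)
    have hη0 := (hη t).ne'
    calc ⟪g t, x t - u t⟫ = c t * (2 * η t * ⟪g t, x t - u t⟫) := by
          simp only [c]; field_simp
      _ ≤ c t * (‖x t - u t‖ ^ 2 - ‖x (t + 1) - u t‖ ^ 2 + η t ^ 2 * ‖g t‖ ^ 2) :=
        mul_le_mul_of_nonneg_left h (inv_nonneg.2 (by linarith [hη t]))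
      _ = _ := by simp only [c]; field_simp
  have hshift : ∀ t, ‖x (t + 1) - u (t + 1)‖ ^ 2 - ‖x (t + 1) - u t‖ ^ 2 ≤
      2 * D * ‖u (t + 1) - u t‖ := fun t =>
    sq_norm_sub_sub_sq_norm_sub_le (hdiam _ (hx _) _ (hu _)) (hdiam _ (hx _) _ (hu _))
  have htel := sum_mul_sub_le_of_monotone (fun t => (inv_pos.2 (by linarith [hη t])).le) hc
    (fun t => pow_le_pow_left₀ (norm_nonneg _) (hdiam _ (hx t) _ (hu t)) 2)
    (fun t => sq_nonneg ‖x (t + 1) - u t‖) hshift (fun t => by positivity) n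
  calc ∑ t ∈ range (n + 1), ⟪g t, x t - u t⟫
      ≤ ∑ t ∈ range (n + 1), (c t * (‖x t - u t‖ ^ 2 - ‖x (t + 1) - u t‖ ^ 2) +
          η t * ‖g t‖ ^ 2 / 2) := sum_le_sum fun t _ => hone t
    _ ≤ _ := by
      rw [sum_add_distrib, div_eq_inv_mul, mul_sum]
      exact add_le_add_left htel _

theorem sum_div_sqrt_two_mul_sum_mul_le {a : ℕ → ℝ} (ha : ∀ t, 0 ≤ a t) {K : ℝ} (hK : 0 ≤ K)
    (n : ℕ) :
    ∑ t ∈ range n, K / √(2 * ∑ τ ∈ range (t + 1), a τ) * a t / 2 ≤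
      K * √(∑ t ∈ range n, a t) / √2 :=
  calc ∑ t ∈ range n, K / √(2 * ∑ τ ∈ range (t + 1), a τ) * a t / 2
      = K / (2 * √2) * ∑ t ∈ range n, a t / √(∑ τ ∈ range (t + 1), a τ) := by
        rw [mul_sum]
        refine sum_congr rfl fun t _ => ?_
        rw [Real.sqrt_mul zero_le_two]
        ring
    _ ≤ K / (2 * √2) * (2 * √(∑ t ∈ range n, a t)) := by
        gcongr
        exact sum_div_sqrt_sum_range_succ_le ha n
    _ = K * √(∑ t ∈ range n, a t) / √2 := by field_simp

theorem sum_inner_sub_le_of_adaptive_projected_gradient {E : Type*} [NormedAddCommGroup E]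
    [InnerProductSpace ℝ E] {X : Set E} (hX : Convex ℝ X) {D : ℝ} (hD : 0 ≤ D)
    (hdiam : ∀ a ∈ X, ∀ b ∈ X, ‖a - b‖ ≤ D) {x u g : ℕ → E} (hg : ∀ t, g t ≠ 0)
    {K : ℝ} (hK : 0 < K) {η : ℕ → ℝ}
    (hη : ∀ t, η t = K / √(2 * ∑ τ ∈ range (t + 1), ‖g τ‖ ^ 2))
    (hx : ∀ t, x t ∈ X) (hu : ∀ t, u t ∈ X)
    (hstep : ∀ t, ∀ z ∈ X, ‖(x t - η t • g t) - x (t + 1)‖ ≤ ‖(x t - η t • g t) - z‖)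
    (n : ℕ) (hpath : D ^ 2 + 2 * D * ∑ t ∈ range n, ‖u (t + 1) - u t‖ ≤ K ^ 2) :
    ∑ t ∈ range (n + 1), ⟪g t, x t - u t⟫ ≤
      √2 * K * √(∑ t ∈ range (n + 1), ‖g t‖ ^ 2) := by
  set S : ℕ → ℝ := fun t => ∑ τ ∈ range (t + 1), ‖g τ‖ ^ 2
  have hS : ∀ t, 0 < S t := fun t =>
    sum_pos (fun τ _ => by have := hg τ; positivity) nonempty_range_add_one
  have hη_pos : ∀ t, 0 < η t := fun t => by
    rw [hη]; exact div_pos hK (Real.sqrt_pos.2 (by linarith [hS t]))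
  have hη_anti : Antitone η := fun s t hst => by
    have := hS s
    rw [hη, hη]
    gcongr
  have hdrift : (D ^ 2 + 2 * D * ∑ t ∈ range n, ‖u (t + 1) - u t‖) / (2 * η n) ≤
      K * √(S n) / √2 :=
    calc (D ^ 2 + 2 * D * ∑ t ∈ range n, ‖u (t + 1) - u t‖) / (2 * η n)
        ≤ K ^ 2 / (2 * η n) := by have := hη_pos n; gcongr
      _ = K * √(S n) / √2 := by
          have := hS n
          rw [hη, Real.sqrt_mul zero_le_two]
          field_simp
          rw [Real.sq_sqrt zero_le_two]
  calc ∑ t ∈ range (n + 1), ⟪g t, x t - u t⟫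
      ≤ (D ^ 2 + 2 * D * ∑ t ∈ range n, ‖u (t + 1) - u t‖) / (2 * η n) +
          ∑ t ∈ range (n + 1), η t * ‖g t‖ ^ 2 / 2 :=
        sum_inner_sub_le_of_projected_gradient hX hD hdiam hη_pos hη_anti hx hu hstep n
    _ ≤ K * √(S n) / √2 + K * √(S n) / √2 := by
        gcongr
        simpa only [hη] using
          sum_div_sqrt_two_mul_sum_mul_le (fun t => sq_nonneg ‖g t‖) hK.le (n + 1)
    _ = √2 * K * √(S n) := by
        field_simp
        rw [Real.sq_sqrt zero_le_two]
        ring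

theorem stmt14_general {d : ℕ} (T : ℕ) (X : Set (EuclideanSpace ℝ (Fin d)))
    (hXconv : Convex ℝ X)
    (D : ℝ) (hD : 0 ≤ D) (hdiam : ∀ a ∈ X, ∀ b ∈ X, ‖a - b‖ ≤ D)
    (f : ℕ → EuclideanSpace ℝ (Fin d) → ℝ)
    (x u : ℕ → EuclideanSpace ℝ (Fin d))
    (hx : ∀ t, x t ∈ X) (hu : ∀ t, u t ∈ X)
    (grad : ℕ → EuclideanSpace ℝ (Fin d))
    (hgradne : ∀ t, grad t ≠ 0)
    (hsubgrad : ∀ t, ∀ y ∈ X, f t (x t) + ⟪grad t, y - x t⟫ ≤ f t y)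
    (P : ℝ) (hP : 0 ≤ P)
    (hpath : ∑ t ∈ Finset.range (T - 1), ‖u (t + 1) - u t‖ ≤ P)
    (η : ℕ → ℝ)
    (hη : ∀ t, η t = (D + 1) * Real.sqrt (1 + P) /
        Real.sqrt (2 * ∑ τ ∈ Finset.range (t + 1), ‖grad τ‖ ^ 2))
    (hupdate : ∀ t, x (t + 1) ∈ X ∧
        ∀ z ∈ X, ‖(x t - η t • grad t) - x (t + 1)‖ ≤ ‖(x t - η t • grad t) - z‖) :
    ∑ t ∈ Finset.range T, (f t (x t) - f t (u t)) ≤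
      (D + 1) * Real.sqrt (2 * (1 + P)) *
        Real.sqrt (∑ t ∈ Finset.range T, ‖grad t‖ ^ 2) := by
  obtain _ | n := T
  · simp
  have hlin : ∀ t, f t (x t) - f t (u t) ≤ ⟪grad t, x t - u t⟫ := fun t => by
    have := hsubgrad t (u t) (hu t)
    rw [← neg_sub, inner_neg_right] at this
    linarith
  have hK : D ^ 2 + 2 * D * ∑ t ∈ range n, ‖u (t + 1) - u t‖ ≤ ((D + 1) * √(1 + P)) ^ 2 := by
    have hpath' : ∑ t ∈ range n, ‖u (t + 1) - u t‖ ≤ P := by simpa using hpath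
    rw [mul_pow, Real.sq_sqrt (by linarith)]
    nlinarith [mul_le_mul_of_nonneg_left hpath' hD]
  calc ∑ t ∈ range (n + 1), (f t (x t) - f t (u t))
      ≤ ∑ t ∈ range (n + 1), ⟪grad t, x t - u t⟫ := sum_le_sum fun t _ => hlin t
    _ ≤ √2 * ((D + 1) * √(1 + P)) * √(∑ t ∈ range (n + 1), ‖grad t‖ ^ 2) :=
        sum_inner_sub_le_of_adaptive_projected_gradient hXconv hD hdiam hgradne
          (by positivity) hη hx hu (fun t => (hupdate t).2) n hK
    _ = _ := by rw [Real.sqrt_mul zero_le_two]; ring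

/-- dynamic regret of adaptive OGD: running projected subgradient
descent with step sizes `η_t = (D+1)√(1+P)/√(2 Σ_{τ≤t} ‖∇_τ‖²)` on a closed convex
set of diameter `D`, against any comparator sequence of path length at most `P`,
gives dynamic regret at most `(D+1)√(2(1+P))·√(Σ_t ‖∇_t‖²)`. -/
theorem stmt14 {d : ℕ} (T : ℕ) (X : Set (EuclideanSpace ℝ (Fin d)))
    (hXcl : IsClosed X) (hXconv : Convex ℝ X)
    (D : ℝ) (hD : 0 ≤ D) (hdiam : ∀ a ∈ X, ∀ b ∈ X, ‖a - b‖ ≤ D)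
    (f : ℕ → EuclideanSpace ℝ (Fin d) → ℝ)
    (hfconv : ∀ t, ConvexOn ℝ X (f t))
    (x u : ℕ → EuclideanSpace ℝ (Fin d))
    (hx : ∀ t, x t ∈ X) (hu : ∀ t, u t ∈ X)
    (grad : ℕ → EuclideanSpace ℝ (Fin d))
    (hgradne : ∀ t, grad t ≠ 0)
    (hsubgrad : ∀ t, ∀ y ∈ X, f t (x t) + ⟪grad t, y - x t⟫ ≤ f t y)
    (P : ℝ) (hP : 0 ≤ P)
    (hpath : ∑ t ∈ Finset.range (T - 1), ‖u (t + 1) - u t‖ ≤ P)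
    (η : ℕ → ℝ)
    (hη : ∀ t, η t = (D + 1) * Real.sqrt (1 + P) /
        Real.sqrt (2 * ∑ τ ∈ Finset.range (t + 1), ‖grad τ‖ ^ 2))
    (hupdate : ∀ t, x (t + 1) ∈ X ∧
        ∀ z ∈ X, ‖(x t - η t • grad t) - x (t + 1)‖ ≤ ‖(x t - η t • grad t) - z‖) :
    ∑ t ∈ Finset.range T, (f t (x t) - f t (u t)) ≤
      (D + 1) * Real.sqrt (2 * (1 + P)) *
        Real.sqrt (∑ t ∈ Finset.range T, ‖grad t‖ ^ 2) :=
  stmt14_general T X hXconv D hD hdiam f x u hx hu grad hgradne hsubgrad P hP hpath η hη hupdate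
end
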